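/- Let ε > 0 and b₀ ≥ 0, and set B(t) := (1 − e^{−b₀ t})/b₀ if b₀ ≠ 0 and B(t) := t if b₀ = 0. Define P(x,t) := B(t) − ∫₀^t s(x,r) dr. Then for every x > 0 and t > 0, ∂ₜ P(x,t) − ε ∂ₓₓ P(x,t) + b₀ P(x,t) = 0; moreover P(0,t) = B(t) for all t ≥ 0 and P(x,0) = 0 for all x > 0. -/

import Mathlib

open Real MeasureTheory intervalIntegral Filter Set Metric


/-- The error function `erf z = (2/√π) ∫₀^z e^{-r²} dr`. -/
noncomputable def erf (z : ℝ) : ℝ :=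
  2 / Real.sqrt Real.pi * ∫ r in (0:ℝ)..z, Real.exp (-r ^ 2)

/-- The singular function `s(x,t) = e^{-b₀ t} erf(x/(2√(ε t)))`. -/
noncomputable def s (ε b₀ x t : ℝ) : ℝ :=
  Real.exp (-b₀ * t) * erf (x / (2 * Real.sqrt (ε * t)))

/-- `B(t) = (1 − e^{−b₀ t})/b₀` if `b₀ ≠ 0`, and `B(t) = t` if `b₀ = 0`. -/
noncomputable def B (b₀ t : ℝ) : ℝ :=
  if b₀ ≠ 0 then (1 - Real.exp (-b₀ * t)) / b₀ else t

/-- The auxiliary function `P(x,t) := B(t) − ∫₀^t s(x,r) dr`. -/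
noncomputable def P (ε b₀ x t : ℝ) : ℝ :=
  B b₀ t - ∫ r in (0:ℝ)..t, s ε b₀ x r


lemma erf_hasDerivAt (z : ℝ) :
    HasDerivAt erf (2 / Real.sqrt Real.pi * Real.exp (-z ^ 2)) z := by
  have hc : Continuous fun r : ℝ => Real.exp (-r ^ 2) := by continuity
  have h : HasDerivAt (fun u => ∫ r in (0:ℝ)..u, Real.exp (-r ^ 2)) (Real.exp (-z ^ 2)) z :=
    integral_hasDerivAt_right (hc.intervalIntegrable _ _)
      hc.aestronglyMeasurable.stronglyMeasurableAtFilter hc.continuousAt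
  exact (h.const_mul _)

/-- spatial derivative of s -/
noncomputable def sx (ε b₀ x t : ℝ) : ℝ :=
  Real.exp (-b₀ * t) * (2 / Real.sqrt Real.pi * Real.exp (-(x / (2 * Real.sqrt (ε * t))) ^ 2))
    / (2 * Real.sqrt (ε * t))

/-- second spatial derivative of s -/
noncomputable def sxx (ε b₀ x t : ℝ) : ℝ :=
  -(2 * (sx ε b₀ x t * (x / (2 * Real.sqrt (ε * t)))) / (2 * Real.sqrt (ε * t)))

/-- time derivative of s -/
noncomputable def stt (ε b₀ x t : ℝ) : ℝ :=
  -b₀ * s ε b₀ x t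
    + Real.exp (-b₀ * t) * (2 / Real.sqrt Real.pi * Real.exp (-(x / (2 * Real.sqrt (ε * t))) ^ 2))
        * (-(x / (2 * Real.sqrt (ε * t))) / (2 * t))

lemma hasDerivAt_s_x (ε b₀ : ℝ) (hε : 0 < ε) {t : ℝ} (ht : 0 < t) (ξ : ℝ) :
    HasDerivAt (fun y => s ε b₀ y t) (sx ε b₀ ξ t) ξ := by
  have hq : 0 < Real.sqrt (ε * t) := Real.sqrt_pos.2 (mul_pos hε ht)
  have hc : (2 * Real.sqrt (ε * t)) ≠ 0 := by positivity
  have h1 : HasDerivAt (fun y : ℝ => y / (2 * Real.sqrt (ε * t)))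
      (1 / (2 * Real.sqrt (ε * t))) ξ := by
    simpa using (hasDerivAt_id ξ).div_const (2 * Real.sqrt (ε * t))
  have h2 := (erf_hasDerivAt (ξ / (2 * Real.sqrt (ε * t)))).comp ξ h1
  have h3 := h2.const_mul (Real.exp (-b₀ * t))
  refine h3.congr_deriv ?_
  simp only [sx]
  ring

lemma hasDerivAt_sx_x (ε b₀ : ℝ) (hε : 0 < ε) {t : ℝ} (ht : 0 < t) (ξ : ℝ) :
    HasDerivAt (fun y => sx ε b₀ y t) (sxx ε b₀ ξ t) ξ := by
  have hq : 0 < Real.sqrt (ε * t) := Real.sqrt_pos.2 (mul_pos hε ht)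
  have hc : (2 * Real.sqrt (ε * t)) ≠ 0 := by positivity
  have h1 : HasDerivAt (fun y : ℝ => y / (2 * Real.sqrt (ε * t)))
      (1 / (2 * Real.sqrt (ε * t))) ξ := by
    simpa using (hasDerivAt_id ξ).div_const (2 * Real.sqrt (ε * t))
  have h2 : HasDerivAt (fun y : ℝ => -(y / (2 * Real.sqrt (ε * t))) ^ 2)
      (-(2 * (ξ / (2 * Real.sqrt (ε * t))) * (1 / (2 * Real.sqrt (ε * t))))) ξ := by
    have := (h1.pow 2).neg
    refine this.congr_deriv ?_
    ring
  have h3 := h2.exp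
  have h4 := ((h3.const_mul (2 / Real.sqrt Real.pi)).const_mul
      (Real.exp (-b₀ * t))).div_const (2 * Real.sqrt (ε * t))
  refine h4.congr_deriv ?_
  simp only [sxx, sx]
  field_simp

lemma hasDerivAt_s_t (ε b₀ : ℝ) (hε : 0 < ε) (x : ℝ) {t : ℝ} (ht : 0 < t) :
    HasDerivAt (fun τ => s ε b₀ x τ) (stt ε b₀ x t) t := by
  have hεt : (0:ℝ) < ε * t := mul_pos hε ht
  have hq : 0 < Real.sqrt (ε * t) := Real.sqrt_pos.2 hεt
  have hq2 : Real.sqrt (ε * t) ^ 2 = ε * t := Real.sq_sqrt hεt.le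
  have hE : HasDerivAt (fun τ : ℝ => Real.exp (-b₀ * τ)) (Real.exp (-b₀ * t) * (-b₀)) t := by
    have : HasDerivAt (fun τ : ℝ => -b₀ * τ) (-b₀) t := by
      simpa using (hasDerivAt_id t).const_mul (-b₀)
    exact this.exp
  have hin : HasDerivAt (fun τ : ℝ => ε * τ) ε t := by
    simpa using (hasDerivAt_id t).const_mul ε
  have hsq : HasDerivAt (fun τ : ℝ => Real.sqrt (ε * τ)) (1 / (2 * Real.sqrt (ε * t)) * ε) t :=
    (Real.hasDerivAt_sqrt (ne_of_gt hεt)).comp t hin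
  have hden : HasDerivAt (fun τ : ℝ => 2 * Real.sqrt (ε * τ))
      (2 * (1 / (2 * Real.sqrt (ε * t)) * ε)) t := hsq.const_mul 2
  have hu : HasDerivAt (fun τ : ℝ => x / (2 * Real.sqrt (ε * τ)))
      (-(x / (2 * Real.sqrt (ε * t))) / (2 * t)) t := by
    have h := (hasDerivAt_const t x).div hden (by positivity)
    refine h.congr_deriv ?_
    set q := Real.sqrt (ε * t) with hqdef
    have he : ε = q ^ 2 / t := by field_simp [← hq2]; linarith
    rw [he]; field_simp; ring
  have herf := (erf_hasDerivAt (x / (2 * Real.sqrt (ε * t)))).comp t hu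
  have := hE.mul herf
  refine this.congr_deriv ?_
  simp only [stt, s, Function.comp_def]
  ring

lemma B_hasDerivAt (b₀ t : ℝ) : HasDerivAt (B b₀) (Real.exp (-b₀ * t)) t := by
  by_cases hb0 : b₀ = 0
  · subst hb0
    have hB : B 0 = fun τ : ℝ => τ := by funext τ; simp [B]
    rw [hB]
    simpa using hasDerivAt_id' t
  · have hE : HasDerivAt (fun τ : ℝ => Real.exp (-b₀ * τ)) (Real.exp (-b₀ * t) * (-b₀)) t := by
      have : HasDerivAt (fun τ : ℝ => -b₀ * τ) (-b₀) t := by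
        simpa using (hasDerivAt_id t).const_mul (-b₀)
      exact this.exp
    have h := ((hE.const_sub 1).div_const b₀)
    have heq : (fun τ => (1 - Real.exp (-b₀ * τ)) / b₀) = B b₀ := by
      funext τ; simp [B, hb0]
    rw [heq] at h
    refine h.congr_deriv ?_
    field_simp
  
lemma b0_mul_B (b₀ t : ℝ) : b₀ * B b₀ t = 1 - Real.exp (-b₀ * t) := by
  by_cases hb0 : b₀ = 0
  · simp [B, hb0]
  · simp only [B, hb0, ne_eq, not_false_eq_true, if_true]
    field_simp

lemma eps_sxx_eq (ε b₀ x : ℝ) (hε : 0 < ε) {r : ℝ} (hr : 0 < r) :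
    ε * sxx ε b₀ x r = stt ε b₀ x r + b₀ * s ε b₀ x r := by
  have hεr : (0:ℝ) < ε * r := mul_pos hε hr
  have hq : 0 < Real.sqrt (ε * r) := Real.sqrt_pos.2 hεr
  have hq2 : Real.sqrt (ε * r) ^ 2 = ε * r := Real.sq_sqrt hεr.le
  simp only [sxx, sx, stt, s]
  set q := Real.sqrt (ε * r) with hqdef
  have he : ε = q ^ 2 / r := by field_simp [← hq2]; linarith
  rw [he]; field_simp; ring

lemma erf_continuous : Continuous erf := by
  exact continuous_iff_continuousAt.2 fun x => (erf_hasDerivAt x).continuousAt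

lemma erf_zero : erf 0 = 0 := by simp [erf]

lemma gauss_int : ∫ r in Ioi (0:ℝ), Real.exp (-r^2) = Real.sqrt Real.pi / 2 := by
  have := integral_gaussian_Ioi 1
  simpa using this

lemma erf_tendsto_atTop : Tendsto erf atTop (nhds 1) := by
  have hint : IntegrableOn (fun r : ℝ => Real.exp (-r^2)) (Ioi 0) := by
    have := (integrable_exp_neg_mul_sq (b := 1) one_pos).integrableOn (s := Ioi 0)
    simpa using this
  have h := MeasureTheory.intervalIntegral_tendsto_integral_Ioi 0 hint tendsto_id
  rw [gauss_int] at h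
  have h2 : Tendsto (fun z => 2 / Real.sqrt Real.pi * ∫ r in (0:ℝ)..z, Real.exp (-r ^ 2)) atTop
      (nhds (2 / Real.sqrt Real.pi * (Real.sqrt Real.pi / 2))) := h.const_mul _
  have hπ : Real.sqrt Real.pi ≠ 0 := by positivity
  rw [show 2 / Real.sqrt Real.pi * (Real.sqrt Real.pi / 2) = 1 by field_simp] at h2
  exact h2

lemma erf_nonneg {z : ℝ} (hz : 0 ≤ z) : 0 ≤ erf z := by
  have : 0 ≤ ∫ r in (0:ℝ)..z, Real.exp (-r ^ 2) :=
    intervalIntegral.integral_nonneg hz (fun _ _ => (Real.exp_pos _).le)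
  have hπ : 0 ≤ 2 / Real.sqrt Real.pi := by positivity
  exact mul_nonneg hπ this

lemma erf_le_one {z : ℝ} (hz : 0 ≤ z) : erf z ≤ 1 := by
  have hint : IntegrableOn (fun r : ℝ => Real.exp (-r^2)) (Ioi 0) := by
    have := (integrable_exp_neg_mul_sq (b := 1) one_pos).integrableOn (s := Ioi 0)
    simpa using this
  have h1 : ∫ r in (0:ℝ)..z, Real.exp (-r ^ 2) ≤ ∫ r in Ioi (0:ℝ), Real.exp (-r^2) := by
    rw [intervalIntegral.integral_of_le hz]
    apply MeasureTheory.setIntegral_mono_set hint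
    · filter_upwards with r using (Real.exp_pos _).le
    · filter_upwards with r hr using hr.1
  rw [gauss_int] at h1
  have hπ : 0 < Real.sqrt Real.pi := by positivity
  calc erf z ≤ 2 / Real.sqrt Real.pi * (Real.sqrt Real.pi / 2) := by
        apply mul_le_mul_of_nonneg_left h1 (by positivity)
      _ = 1 := by field_simp

lemma exp_neg_le_inv {v : ℝ} (hv : 0 < v) : Real.exp (-v) ≤ 1 / v := by
  rw [Real.exp_neg, one_div]
  apply inv_anti₀ hv
  linarith [Real.add_one_le_exp v]

lemma exp_neg_le_sq {v : ℝ} (hv : 0 < v) : Real.exp (-v) ≤ 4 / v ^ 2 := by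
  have h1 : v ^ 2 / 4 ≤ Real.exp v := by
    have h2 : v / 2 + 1 ≤ Real.exp (v / 2) := by linarith [Real.add_one_le_exp (v/2)]
    have h3 : Real.exp (v/2) * Real.exp (v/2) = Real.exp v := by
      rw [← Real.exp_add]; ring_nf
    nlinarith [Real.exp_pos (v/2)]
  have h4 : (0:ℝ) < v ^ 2 / 4 := by positivity
  calc Real.exp (-v) = 1 / Real.exp v := by rw [Real.exp_neg, one_div]
    _ ≤ 1 / (v ^ 2 / 4) := one_div_le_one_div_of_le h4 h1
    _ = 4 / v ^ 2 := by rw [one_div_div]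

lemma meas_s (ε b₀ x : ℝ) : Measurable (fun r => s ε b₀ x r) := by
  have h1 : Measurable fun r : ℝ => x / (2 * Real.sqrt (ε * r)) := by
    apply Measurable.div measurable_const
    fun_prop
  have h2 : Measurable fun r : ℝ => Real.exp (-b₀ * r) := by fun_prop
  exact h2.mul (erf_continuous.measurable.comp h1)

lemma meas_sx (ε b₀ x : ℝ) : Measurable (fun r => sx ε b₀ x r) := by
  unfold sx
  have h1 : Measurable fun r : ℝ => x / (2 * Real.sqrt (ε * r)) := by
    apply Measurable.div measurable_const
    fun_prop
  apply Measurable.div _ (by fun_prop)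
  apply Measurable.mul (by fun_prop)
  exact (measurable_const.mul (((h1.pow_const 2).neg).exp))

lemma meas_stt (ε b₀ x : ℝ) : Measurable (fun r => stt ε b₀ x r) := by
  unfold stt
  have h1 : Measurable fun r : ℝ => x / (2 * Real.sqrt (ε * r)) := by
    apply Measurable.div measurable_const
    fun_prop
  apply Measurable.add
  · exact (meas_s ε b₀ x).const_mul _
  · apply Measurable.mul
    · apply Measurable.mul (by fun_prop)
      exact measurable_const.mul (((h1.pow_const 2).neg).exp)
    · exact h1.neg.div (by fun_prop)

lemma s_mem_Icc (ε b₀ : ℝ) (hb : 0 ≤ b₀) {x r : ℝ} (hx : 0 ≤ x) (hr : 0 ≤ r) :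
    s ε b₀ x r ∈ Icc (0:ℝ) 1 := by
  have harg : 0 ≤ x / (2 * Real.sqrt (ε * r)) := by positivity
  have hexp : Real.exp (-b₀ * r) ≤ 1 := by
    rw [Real.exp_le_one_iff]
    nlinarith
  constructor
  · exact mul_nonneg (Real.exp_pos _).le (erf_nonneg harg)
  · have := mul_le_mul hexp (erf_le_one harg) (erf_nonneg harg) zero_le_one
    simpa [s] using this

lemma intInt_s (ε b₀ : ℝ) (hb : 0 ≤ b₀) {x t : ℝ} (hx : 0 ≤ x) (ht : 0 ≤ t) :
    IntervalIntegrable (fun r => s ε b₀ x r) volume 0 t := by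
  apply IntervalIntegrable.mono_fun' (g := fun _ => (1:ℝ)) intervalIntegrable_const
  · exact (meas_s ε b₀ x).aestronglyMeasurable
  · filter_upwards [ae_restrict_mem measurableSet_uIoc] with r hr
    rw [uIoc_of_le ht] at hr
    have h := s_mem_Icc ε b₀ hb hx hr.1.le
    rw [Real.norm_eq_abs, abs_of_nonneg h.1]
    exact h.2

lemma sx_nonneg (ε b₀ x t : ℝ) : 0 ≤ sx ε b₀ x t := by
  unfold sx
  positivity

lemma sx_le (ε b₀ : ℝ) (hε : 0 < ε) (hb : 0 ≤ b₀) {x t r ξ : ℝ} (hx : 0 < x) (hr : 0 < r)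
    (hrt : r ≤ t) (hξ : x / 2 ≤ ξ) :
    sx ε b₀ ξ r ≤ 16 * Real.sqrt (ε * t) / (Real.sqrt Real.pi * x ^ 2) := by
  unfold sx
  set q := Real.sqrt (ε * r) with hqd
  have hq0 : 0 < q := Real.sqrt_pos.2 (mul_pos hε hr)
  have hq2 : q ^ 2 = ε * r := Real.sq_sqrt (mul_pos hε hr).le
  have hπ : 0 < Real.sqrt Real.pi := Real.sqrt_pos.2 Real.pi_pos
  have hξ0 : 0 < ξ := lt_of_lt_of_le (by linarith) hξ
  have hul : x / (4 * q) ≤ ξ / (2 * q) := by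
    rw [show x / (4 * q) = (x/2) / (2*q) by ring]
    gcongr
  have hu0 : 0 < x / (4 * q) := by positivity
  have hE : Real.exp (-b₀ * r) ≤ 1 := Real.exp_le_one_iff.2 (by nlinarith)
  have hexp : Real.exp (-(ξ / (2*q)) ^ 2) ≤ 1 / (x / (4*q)) ^ 2 := by
    calc Real.exp (-(ξ / (2*q)) ^ 2) ≤ 1 / (ξ / (2*q)) ^ 2 :=
          exp_neg_le_inv (by positivity)
      _ ≤ 1 / (x / (4*q)) ^ 2 := by gcongr
  calc Real.exp (-b₀ * r) * (2 / Real.sqrt Real.pi * Real.exp (-(ξ / (2 * q)) ^ 2)) / (2 * q)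
      ≤ 1 * (2 / Real.sqrt Real.pi * (1 / (x / (4*q)) ^ 2)) / (2 * q) := by
        gcongr
    _ = 16 * q / (Real.sqrt Real.pi * x ^ 2) := by
        field_simp
        ring
    _ ≤ 16 * Real.sqrt (ε * t) / (Real.sqrt Real.pi * x ^ 2) := by
        gcongr
        exact Real.sqrt_le_sqrt (by nlinarith)

lemma sxx_abs_le (ε b₀ : ℝ) (hε : 0 < ε) (hb : 0 ≤ b₀) {x t r ξ : ℝ} (hx : 0 < x) (hr : 0 < r)
    (hrt : r ≤ t) (hξ : x / 2 ≤ ξ) :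
    |sxx ε b₀ ξ r| ≤ 256 * Real.sqrt (ε * t) / (Real.sqrt Real.pi * x ^ 3) := by
  have hq0 : 0 < Real.sqrt (ε * r) := Real.sqrt_pos.2 (mul_pos hε hr)
  have hq2 : Real.sqrt (ε * r) ^ 2 = ε * r := Real.sq_sqrt (mul_pos hε hr).le
  have hπ : 0 < Real.sqrt Real.pi := Real.sqrt_pos.2 Real.pi_pos
  have hξ0 : 0 < ξ := lt_of_lt_of_le (by linarith) hξ
  have hsxnn := sx_nonneg ε b₀ ξ r
  set q := Real.sqrt (ε * r) with hqd
  have habs : |sxx ε b₀ ξ r| = 2 * (sx ε b₀ ξ r * (ξ / (2 * q))) / (2 * q) := by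
    rw [sxx, ← hqd, abs_neg, abs_of_nonneg]
    apply div_nonneg _ (by positivity)
    apply mul_nonneg (by norm_num) (mul_nonneg hsxnn (by positivity))
  rw [habs]
  have hul : x / (4 * q) ≤ ξ / (2 * q) := by
    rw [show x / (4 * q) = (x/2) / (2*q) by ring]
    gcongr
  have hu0 : 0 < x / (4 * q) := by positivity
  have hE : Real.exp (-b₀ * r) ≤ 1 := Real.exp_le_one_iff.2 (by nlinarith)
  have hsx : sx ε b₀ ξ r ≤ Real.exp (-(ξ / (2*q)) ^ 2) / (Real.sqrt Real.pi * q) := by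
    rw [sx, ← hqd]
    calc Real.exp (-b₀ * r) * (2 / Real.sqrt Real.pi * Real.exp (-(ξ / (2 * q)) ^ 2)) / (2 * q)
        ≤ 1 * (2 / Real.sqrt Real.pi * Real.exp (-(ξ / (2 * q)) ^ 2)) / (2 * q) := by
          gcongr
      _ = Real.exp (-(ξ / (2*q)) ^ 2) / (Real.sqrt Real.pi * q) := by
          field_simp
  have hkey : Real.exp (-(ξ / (2*q)) ^ 2) * (ξ / (2*q)) ≤ 4 / (x / (4*q)) ^ 3 := by
    calc Real.exp (-(ξ / (2*q)) ^ 2) * (ξ / (2*q))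
        ≤ (4 / ((ξ / (2*q)) ^ 2) ^ 2) * (ξ / (2*q)) := by
          gcongr
          exact exp_neg_le_sq (by positivity)
      _ = 4 / (ξ / (2*q)) ^ 3 := by
          rw [show ((ξ / (2*q)) ^ 2) ^ 2 = (ξ / (2*q))^4 by ring]
          rw [div_mul_eq_mul_div, div_eq_div_iff (by positivity) (by positivity)]
          ring
      _ ≤ 4 / (x / (4*q)) ^ 3 := by gcongr
  calc 2 * (sx ε b₀ ξ r * (ξ / (2 * q))) / (2 * q)
      ≤ 2 * ((Real.exp (-(ξ / (2*q)) ^ 2) / (Real.sqrt Real.pi * q)) * (ξ / (2 * q))) / (2 * q) := by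
        gcongr
    _ = Real.exp (-(ξ / (2*q)) ^ 2) * (ξ / (2*q)) / (Real.sqrt Real.pi * q ^ 2) := by
        field_simp
    _ ≤ (4 / (x / (4*q)) ^ 3) / (Real.sqrt Real.pi * q ^ 2) := by
        gcongr
    _ = 256 * q / (Real.sqrt Real.pi * x ^ 3) := by
        field_simp
        ring
    _ ≤ 256 * Real.sqrt (ε * t) / (Real.sqrt Real.pi * x ^ 3) := by
        gcongr
        exact Real.sqrt_le_sqrt (by nlinarith)

lemma stt_abs_le (ε b₀ : ℝ) (hε : 0 < ε) (hb : 0 ≤ b₀) {x t r : ℝ} (hx : 0 < x) (hr : 0 < r)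
    (hrt : r ≤ t) :
    |stt ε b₀ x r| ≤ b₀ + 32 * ε * Real.sqrt (ε * t) / (Real.sqrt Real.pi * x ^ 3) := by
  have hq0 : 0 < Real.sqrt (ε * r) := Real.sqrt_pos.2 (mul_pos hε hr)
  have hq2 : Real.sqrt (ε * r) ^ 2 = ε * r := Real.sq_sqrt (mul_pos hε hr).le
  have hπ : 0 < Real.sqrt Real.pi := Real.sqrt_pos.2 Real.pi_pos
  set q := Real.sqrt (ε * r) with hqd
  have hs := s_mem_Icc ε b₀ hb hx.le hr.le
  have h1 : |(-b₀) * s ε b₀ x r| ≤ b₀ := by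
    rw [abs_mul, abs_neg, abs_of_nonneg hb, abs_of_nonneg hs.1]
    nlinarith [hs.2]
  have hE : Real.exp (-b₀ * r) ≤ 1 := Real.exp_le_one_iff.2 (by nlinarith)
  have hu0 : 0 < x / (2 * q) := by positivity
  have h2 : |Real.exp (-b₀ * r) * (2 / Real.sqrt Real.pi * Real.exp (-(x / (2 * q)) ^ 2))
      * (-(x / (2 * q)) / (2 * r))|
      ≤ 32 * ε * Real.sqrt (ε * t) / (Real.sqrt Real.pi * x ^ 3) := by
    have habs : |Real.exp (-b₀ * r) * (2 / Real.sqrt Real.pi * Real.exp (-(x / (2 * q)) ^ 2))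
        * (-(x / (2 * q)) / (2 * r))|
        = Real.exp (-b₀ * r) * (2 / Real.sqrt Real.pi * Real.exp (-(x / (2 * q)) ^ 2))
          * (x / (2 * q) / (2 * r)) := by
      rw [abs_mul, abs_of_nonneg (by positivity : (0:ℝ) ≤ Real.exp (-b₀ * r)
        * (2 / Real.sqrt Real.pi * Real.exp (-(x / (2 * q)) ^ 2)))]
      congr 1
      rw [abs_div, abs_neg, abs_of_nonneg hu0.le, abs_of_nonneg (by positivity : (0:ℝ) ≤ 2*r)]
    rw [habs]
    have hkey : Real.exp (-(x / (2*q)) ^ 2) * (x / (2*q)) ≤ 4 / (x / (2*q)) ^ 3 := by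
      calc Real.exp (-(x / (2*q)) ^ 2) * (x / (2*q))
          ≤ (4 / ((x / (2*q)) ^ 2) ^ 2) * (x / (2*q)) := by
            gcongr
            exact exp_neg_le_sq (by positivity)
        _ = 4 / (x / (2*q)) ^ 3 := by
            rw [show ((x / (2*q)) ^ 2) ^ 2 = (x / (2*q))^4 by ring]
            rw [div_mul_eq_mul_div, div_eq_div_iff (by positivity) (by positivity)]
            ring
    calc Real.exp (-b₀ * r) * (2 / Real.sqrt Real.pi * Real.exp (-(x / (2 * q)) ^ 2))
          * (x / (2 * q) / (2 * r))
        ≤ 1 * (2 / Real.sqrt Real.pi * Real.exp (-(x / (2 * q)) ^ 2)) * (x / (2 * q) / (2 * r)) := by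
          gcongr
      _ = Real.exp (-(x / (2*q)) ^ 2) * (x / (2*q)) / (Real.sqrt Real.pi * r) := by
          field_simp
      _ ≤ (4 / (x / (2*q)) ^ 3) / (Real.sqrt Real.pi * r) := by gcongr
      _ = 32 * (q^2) * q / (Real.sqrt Real.pi * x ^ 3 * r) := by
          field_simp; ring
      _ = 32 * ε * q / (Real.sqrt Real.pi * x ^ 3) := by
          rw [hq2]; field_simp
      _ ≤ 32 * ε * Real.sqrt (ε * t) / (Real.sqrt Real.pi * x ^ 3) := by
          gcongr
          exact Real.sqrt_le_sqrt (by nlinarith)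
  calc |stt ε b₀ x r| ≤ |(-b₀) * s ε b₀ x r|
        + |Real.exp (-b₀ * r) * (2 / Real.sqrt Real.pi * Real.exp (-(x / (2 * q)) ^ 2))
          * (-(x / (2 * q)) / (2 * r))| := by
        rw [stt, ← hqd]
        exact abs_add_le _ _
    _ ≤ b₀ + 32 * ε * Real.sqrt (ε * t) / (Real.sqrt Real.pi * x ^ 3) := add_le_add h1 h2

lemma intInt_stt (ε b₀ : ℝ) (hε : 0 < ε) (hb : 0 ≤ b₀) {x t : ℝ} (hx : 0 < x) (ht : 0 < t) :
    IntervalIntegrable (fun r => stt ε b₀ x r) volume 0 t := by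
  apply IntervalIntegrable.mono_fun'
    (g := fun _ => b₀ + 32 * ε * Real.sqrt (ε * t) / (Real.sqrt Real.pi * x ^ 3))
    intervalIntegrable_const
  · exact (meas_stt ε b₀ x).aestronglyMeasurable
  · filter_upwards [ae_restrict_mem measurableSet_uIoc] with r hr
    rw [uIoc_of_le ht.le] at hr
    rw [Real.norm_eq_abs]
    exact stt_abs_le ε b₀ hε hb hx hr.1 hr.2

lemma s_tendsto_one (ε b₀ : ℝ) {x : ℝ} (hε : 0 < ε) (hx : 0 < x) :
    Tendsto (fun r => s ε b₀ x r) (nhdsWithin 0 (Ioi 0)) (nhds 1) := by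
  have hden : Tendsto (fun r : ℝ => 2 * Real.sqrt (ε * r)) (nhdsWithin 0 (Ioi 0))
      (nhdsWithin 0 (Ioi 0)) := by
    rw [tendsto_nhdsWithin_iff]
    constructor
    · have hc : Continuous fun r : ℝ => 2 * Real.sqrt (ε * r) := by fun_prop
      have h' := (hc.tendsto 0).mono_left (nhdsWithin_le_nhds (s := Ioi (0:ℝ)))
      simpa using h'
    · filter_upwards [self_mem_nhdsWithin] with r hr
      have : (0:ℝ) < r := hr
      exact mul_pos two_pos (Real.sqrt_pos.2 (mul_pos hε this))
  have harg : Tendsto (fun r : ℝ => x / (2 * Real.sqrt (ε * r))) (nhdsWithin 0 (Ioi 0)) atTop := by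
    have hinv := tendsto_inv_nhdsGT_zero.comp hden
    have := hinv.const_mul_atTop hx
    simpa [div_eq_mul_inv, Function.comp] using this
  have herf : Tendsto (fun r : ℝ => erf (x / (2 * Real.sqrt (ε * r)))) (nhdsWithin 0 (Ioi 0))
      (nhds 1) := erf_tendsto_atTop.comp harg
  have hexp : Tendsto (fun r : ℝ => Real.exp (-b₀ * r)) (nhdsWithin 0 (Ioi 0)) (nhds 1) := by
    have hc : Continuous fun r : ℝ => Real.exp (-b₀ * r) := by fun_prop
    have h' := (hc.tendsto 0).mono_left (nhdsWithin_le_nhds (s := Ioi (0:ℝ)))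
    simpa using h'
  have := hexp.mul herf
  simpa [s] using this

lemma integral_stt (ε b₀ : ℝ) (hε : 0 < ε) (hb : 0 ≤ b₀) {x t : ℝ} (hx : 0 < x) (ht : 0 < t) :
    ∫ r in (0:ℝ)..t, stt ε b₀ x r = s ε b₀ x t - 1 := by
  set F : ℝ → ℝ := fun r => if r = 0 then 1 else s ε b₀ x r with hF
  have hcont : ContinuousOn F (Icc 0 t) := by
    intro r hr
    rcases eq_or_ne r 0 with h0 | h0
    · subst h0
      rw [ContinuousWithinAt, hF]
      have hmono : nhdsWithin (0:ℝ) (Icc 0 t) ≤ nhdsWithin (0:ℝ) (Ici 0) :=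
        nhdsWithin_mono _ (Icc_subset_Ici_self)
    -- F 0 = 1
      simp only [if_pos rfl]
      apply Tendsto.mono_left _ hmono
      rw [show Ici (0:ℝ) = insert 0 (Ioi 0) by rw [Set.Ioi_insert], nhdsWithin_insert,
        tendsto_sup]
      constructor
      · have : F 0 = 1 := by simp [hF]
        simpa [this] using tendsto_pure_nhds F 0
      · have hFs : F =ᶠ[nhdsWithin (0:ℝ) (Ioi 0)] fun r => s ε b₀ x r := by
          filter_upwards [self_mem_nhdsWithin] with r hr
          simp [hF, ne_of_gt (show (0:ℝ) < r from hr)]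
        exact (s_tendsto_one ε b₀ hε hx).congr' hFs.symm
    · have hr0 : 0 < r := lt_of_le_of_ne hr.1 (Ne.symm h0)
      have hc : ContinuousAt F r := by
        have hd := (hasDerivAt_s_t ε b₀ hε x hr0).continuousAt
        apply hd.congr
        filter_upwards [isOpen_compl_singleton.mem_nhds (by simpa using h0)] with y hy
        simp [hF, (by simpa using hy : y ≠ 0)]
      exact hc.continuousWithinAt
  have hderiv : ∀ r ∈ Ioo 0 t, HasDerivAt F (stt ε b₀ x r) r := by
    intro r hr
    apply (hasDerivAt_s_t ε b₀ hε x hr.1).congr_of_eventuallyEq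
    filter_upwards [isOpen_compl_singleton.mem_nhds (by simpa using ne_of_gt hr.1)] with y hy
    simp [hF, (by simpa using hy : y ≠ 0)]
  have := intervalIntegral.integral_eq_sub_of_hasDerivAt_of_le ht.le hcont hderiv
    (intInt_stt ε b₀ hε hb hx ht)
  rw [this]
  simp [hF, ne_of_gt ht]

lemma intInt_sx (ε b₀ : ℝ) (hε : 0 < ε) (hb : 0 ≤ b₀) {x t : ℝ} (hx : 0 < x) (ht : 0 < t) :
    IntervalIntegrable (fun r => sx ε b₀ x r) volume 0 t := by
  apply IntervalIntegrable.mono_fun'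
    (g := fun _ => 16 * Real.sqrt (ε * t) / (Real.sqrt Real.pi * x ^ 2))
    intervalIntegrable_const
  · exact (meas_sx ε b₀ x).aestronglyMeasurable
  · filter_upwards [ae_restrict_mem measurableSet_uIoc] with r hr
    rw [uIoc_of_le ht.le] at hr
    rw [Real.norm_eq_abs, abs_of_nonneg (sx_nonneg ε b₀ x r)]
    exact sx_le ε b₀ hε hb hx hr.1 hr.2 (by linarith)

lemma hasDerivAt_int_s (ε b₀ : ℝ) (hε : 0 < ε) (hb : 0 ≤ b₀) {x t : ℝ} (hx : 0 < x) (ht : 0 < t) :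
    HasDerivAt (fun ξ => ∫ r in (0:ℝ)..t, s ε b₀ ξ r) (∫ r in (0:ℝ)..t, sx ε b₀ x r) x := by
  have h := intervalIntegral.hasDerivAt_integral_of_dominated_loc_of_deriv_le (𝕜 := ℝ)
    (μ := volume) (a := 0) (b := t)
    (F := fun ξ r => s ε b₀ ξ r) (F' := fun ξ r => sx ε b₀ ξ r) (x₀ := x)
    (bound := fun _ => 16 * Real.sqrt (ε * t) / (Real.sqrt Real.pi * x ^ 2))
    (ball_mem_nhds x (half_pos hx))
    (Eventually.of_forall fun ξ => (meas_s ε b₀ ξ).aestronglyMeasurable.restrict)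
    (intInt_s ε b₀ hb hx.le ht.le)
    ((meas_sx ε b₀ x).aestronglyMeasurable.restrict)
    ?_ intervalIntegrable_const ?_
  · exact h.2
  · apply Eventually.of_forall
    intro r hr ξ hξ
    rw [uIoc_of_le ht.le] at hr
    rw [Real.ball_eq_Ioo] at hξ
    rw [Real.norm_eq_abs, abs_of_nonneg (sx_nonneg ε b₀ ξ r)]
    exact sx_le ε b₀ hε hb hx hr.1 hr.2 (by linarith [hξ.1])
  · apply Eventually.of_forall
    intro r hr ξ hξ
    rw [uIoc_of_le ht.le] at hr
    exact hasDerivAt_s_x ε b₀ hε hr.1 ξ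

lemma hasDerivAt_int_sx (ε b₀ : ℝ) (hε : 0 < ε) (hb : 0 ≤ b₀) {x t : ℝ} (hx : 0 < x) (ht : 0 < t) :
    HasDerivAt (fun ξ => ∫ r in (0:ℝ)..t, sx ε b₀ ξ r) (∫ r in (0:ℝ)..t, sxx ε b₀ x r) x := by
  have h := intervalIntegral.hasDerivAt_integral_of_dominated_loc_of_deriv_le (𝕜 := ℝ)
    (μ := volume) (a := 0) (b := t)
    (F := fun ξ r => sx ε b₀ ξ r) (F' := fun ξ r => sxx ε b₀ ξ r) (x₀ := x)
    (bound := fun _ => 256 * Real.sqrt (ε * t) / (Real.sqrt Real.pi * x ^ 3))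
    (ball_mem_nhds x (half_pos hx))
    (Eventually.of_forall fun ξ => (meas_sx ε b₀ ξ).aestronglyMeasurable.restrict)
    (intInt_sx ε b₀ hε hb hx ht)
    ?_ ?_ intervalIntegrable_const ?_
  · exact h.2
  · have hm : Measurable (fun r => sxx ε b₀ x r) := by
      unfold sxx
      apply Measurable.neg
      apply Measurable.div _ (by fun_prop)
      apply Measurable.mul measurable_const
      apply Measurable.mul (meas_sx ε b₀ x)
      apply Measurable.div measurable_const (by fun_prop)
    exact hm.aestronglyMeasurable.restrict
  · apply Eventually.of_forall
    intro r hr ξ hξ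
    rw [uIoc_of_le ht.le] at hr
    rw [Real.ball_eq_Ioo] at hξ
    rw [Real.norm_eq_abs]
    exact sxx_abs_le ε b₀ hε hb hx hr.1 hr.2 (by linarith [hξ.1])
  · apply Eventually.of_forall
    intro r hr ξ hξ
    rw [uIoc_of_le ht.le] at hr
    exact hasDerivAt_sx_x ε b₀ hε hr.1 ξ

lemma at_zero (ε b₀ x : ℝ) : ε * sxx ε b₀ x 0 = stt ε b₀ x 0 + b₀ * s ε b₀ x 0 := by
  simp [sxx, sx, stt, s, erf_zero]


/-- The auxiliary function `P` satisfies `∂ₜ P − ε ∂ₓₓ P + b₀ P = 0` for `x > 0`, `t > 0`,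
with `P(0,t) = B(t)` for `t ≥ 0` and `P(x,0) = 0` for `x > 0`. -/
theorem P_properties (ε b₀ : ℝ) (hε : 0 < ε) (hb : 0 ≤ b₀) :
    (∀ x t : ℝ, 0 < x → 0 < t →
      deriv (fun τ => P ε b₀ x τ) t
        - ε * deriv (deriv (fun ξ => P ε b₀ ξ t)) x
        + b₀ * P ε b₀ x t = 0) ∧
    (∀ t : ℝ, 0 ≤ t → P ε b₀ 0 t = B b₀ t) ∧
    (∀ x : ℝ, 0 < x → P ε b₀ x 0 = 0) := by
  refine ⟨?_, ?_, ?_⟩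
  · intro x t hx ht
    have hT : HasDerivAt (fun τ => P ε b₀ x τ) (Real.exp (-b₀ * t) - s ε b₀ x t) t := by
      apply HasDerivAt.sub (B_hasDerivAt b₀ t)
      exact intervalIntegral.integral_hasDerivAt_right (intInt_s ε b₀ hb hx.le ht.le)
        ((meas_s ε b₀ x).stronglyMeasurable.stronglyMeasurableAtFilter)
        (hasDerivAt_s_t ε b₀ hε x ht).continuousAt
    have hT' : deriv (fun τ => P ε b₀ x τ) t = Real.exp (-b₀ * t) - s ε b₀ x t := hT.deriv
    have hD1 : ∀ ξ : ℝ, 0 < ξ →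
        HasDerivAt (fun y => P ε b₀ y t) (-(∫ r in (0:ℝ)..t, sx ε b₀ ξ r)) ξ := by
      intro ξ hξ
      exact (hasDerivAt_int_s ε b₀ hε hb hξ ht).const_sub (B b₀ t)
    have hEq : deriv (fun y => P ε b₀ y t)
        =ᶠ[nhds x] fun ξ => -(∫ r in (0:ℝ)..t, sx ε b₀ ξ r) := by
      filter_upwards [isOpen_Ioi.mem_nhds hx] with ξ hξ
      exact (hD1 ξ hξ).deriv
    have hxx : deriv (deriv (fun y => P ε b₀ y t)) x = -(∫ r in (0:ℝ)..t, sxx ε b₀ x r) := by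
      rw [hEq.deriv_eq]
      exact ((hasDerivAt_int_sx ε b₀ hε hb hx ht).neg).deriv
    have hI1 : ε * ∫ r in (0:ℝ)..t, sxx ε b₀ x r
        = (s ε b₀ x t - 1) + b₀ * ∫ r in (0:ℝ)..t, s ε b₀ x r := by
      rw [← intervalIntegral.integral_const_mul]
      have hcongr : EqOn (fun r => ε * sxx ε b₀ x r)
          (fun r => stt ε b₀ x r + b₀ * s ε b₀ x r) (uIcc (0:ℝ) t) := by
        intro r hr
        rw [uIcc_of_le ht.le] at hr
        rcases eq_or_lt_of_le hr.1 with h0 | h0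
        · simp only
          rw [← h0]
          exact at_zero ε b₀ x
        · exact eps_sxx_eq ε b₀ x hε h0
      rw [intervalIntegral.integral_congr hcongr,
        intervalIntegral.integral_add (intInt_stt ε b₀ hε hb hx ht)
          ((intInt_s ε b₀ hb hx.le ht.le).const_mul b₀),
        integral_stt ε b₀ hε hb hx ht, intervalIntegral.integral_const_mul]
    rw [hT', hxx]
    simp only [P]
    have hbB := b0_mul_B b₀ t
    ring_nf
    ring_nf at hI1 hbB
    linarith [hI1, hbB]
  · intro t ht0
    simp [P, s, erf_zero]
  · intro x hx
    simp [P, B]
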